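/- The set of conjugacy classes of elements of order 4 in SL_2(ℚ) is infinite. -/

import Mathlib

/-!
For a unit `r`, the matrix `!![0, r; -r⁻¹, 0]` squares to `-1`, so it has order `4`. If two such
matrices for `r` and `s` are conjugate in `SL₂`, then `r * s` is a sum of two squares. For distinct
primes `p ≡ 3 (mod 4)` and `q`, the number `p * q` is not a sum of two rational squares, because
its `p`-adic valuation is odd. By Dirichlet's theorem there are infinitely many primes `p ≡ 3 (mod 4)`,
which gives infinitely many pairwise non-conjugate elements of order `4`.
-/

namespace Matrix.SpecialLinearGroup

variable {R : Type*} [CommRing R]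

def antidiag (r : Rˣ) : SpecialLinearGroup (Fin 2) R :=
  ⟨!![0, (r : R); -↑r⁻¹, 0], by simp [det_fin_two_of]⟩

@[simp]
theorem coe_antidiag (r : Rˣ) :
    (antidiag r : Matrix (Fin 2) (Fin 2) R) = !![0, (r : R); -↑r⁻¹, 0] :=
  rfl

theorem antidiag_sq (r : Rˣ) : antidiag r ^ 2 = -1 := by
  ext i j
  fin_cases i <;> fin_cases j <;> simp [sq]

theorem orderOf_antidiag [NeZero (2 : R)] (r : Rˣ) : orderOf (antidiag r) = 4 := by
  have hne : (-1 : SpecialLinearGroup (Fin 2) R) ≠ 1 := by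
    intro h
    have h00 := congrArg (fun g : SpecialLinearGroup (Fin 2) R ↦ (g : Matrix (Fin 2) (Fin 2) R) 0 0) h
    simp only [coe_neg, coe_one, Matrix.neg_apply, Matrix.one_apply_eq] at h00
    exact two_ne_zero (α := R) (by linear_combination -h00)
  refine orderOf_eq_prime_pow (p := 2) (n := 1) ?_ ?_
  · simpa [antidiag_sq] using hne
  · rw [pow_succ, pow_one, pow_mul, antidiag_sq, neg_one_sq]

theorem exists_mul_eq_sq_add_sq_of_isConj_antidiag {r s : Rˣ}
    (h : IsConj (antidiag r) (antidiag s)) : ∃ x y : R, r * s = x ^ 2 + y ^ 2 := by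
  obtain ⟨g, hg⟩ := isConj_iff.1 h
  have hm := congrArg (fun m : SpecialLinearGroup (Fin 2) R ↦ (m : Matrix (Fin 2) (Fin 2) R))
    (mul_inv_eq_iff_eq_mul.1 hg)
  have e00 := congrFun (congrFun hm 0) 0
  have e01 := congrFun (congrFun hm 0) 1
  simp only [coe_mul, coe_antidiag, mul_apply, of_apply, cons_val', cons_val_zero, cons_val_one,
    cons_val_fin_one, Fin.sum_univ_two, mul_zero, zero_mul, mul_neg, zero_add, add_zero] at e00 e01
  have hdet := (g : SpecialLinearGroup (Fin 2) R).2
  rw [det_fin_two] at hdet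
  -- Writing `g = !![a, b; c, d]`, conjugation forces `b = -r s c` and `s d = r a`,
  -- so `r s = r s (a d - b c) = (r a)² + (r s c)²`.
  refine ⟨r * g 0 0, r * s * g 1 0, ?_⟩
  linear_combination -(r * s) * hdet - r * g 0 0 * e01 + r ^ 2 * s * g 1 0 * e00
    + g 0 1 * r * s * g 1 0 * r.mul_inv

end Matrix.SpecialLinearGroup

theorem Nat.even_padicValNat_of_cast_eq_sq_add_sq {n p : ℕ} (hp : p.Prime) (hp4 : p % 4 = 3)
    {u v : ℚ} (h : (n : ℚ) = u ^ 2 + v ^ 2) : Even (padicValNat p n) := by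
  have := Fact.mk hp
  rcases eq_or_ne n 0 with rfl | hn
  · simp
  set d := u.den * v.den
  have hd : d ≠ 0 := mul_ne_zero u.den_ne_zero v.den_ne_zero
  have hsum : n * d ^ 2 = (u.num * v.den).natAbs ^ 2 + (v.num * u.den).natAbs ^ 2 := by
    have hu : (u.den : ℚ) ≠ 0 := by exact_mod_cast u.den_ne_zero
    have hv : (v.den : ℚ) ≠ 0 := by exact_mod_cast v.den_ne_zero
    rw [← Nat.cast_inj (R := ℚ)]
    push_cast [Nat.cast_natAbs, sq_abs, d, h]
    nth_rw 1 [← u.num_div_den, ← v.num_div_den]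
    field_simp
  have heven : Even (padicValNat p (n * d ^ 2)) := by
    by_cases hdvd : p ∣ n * d ^ 2
    · exact Nat.eq_sq_add_sq_iff.1 ⟨_, _, hsum⟩ p
        (Nat.mem_primeFactors.2 ⟨hp, hdvd, by positivity⟩) hp4
    · simp [padicValNat.eq_zero_of_not_dvd hdvd]
  rw [padicValNat.mul hn (pow_ne_zero 2 hd), padicValNat.pow d 2] at heven
  exact (Nat.even_add.1 heven).2 (even_two_mul _)

theorem Nat.infinite_setOf_prime_mod_four_eq_three : {p : ℕ | p.Prime ∧ p % 4 = 3}.Infinite := by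
  convert Nat.infinite_setOfPred_prime_and_eq_mod (q := 4) (a := 3) (by decide) using 4 with p
  rw [← ZMod.val_natCast]
  exact ⟨fun h ↦ ZMod.val_injective 4 (h.trans rfl), fun h ↦ h ▸ rfl⟩

open Matrix.SpecialLinearGroup in
/-- The set of conjugacy classes of elements of order `4` in `SL₂(ℚ)`
is infinite. -/
theorem conjClasses_orderFour_SL2_infinite :
    {c : ConjClasses (Matrix.SpecialLinearGroup (Fin 2) ℚ) |
      ∃ x ∈ c.carrier, orderOf x = 4}.Infinite := by
  have := Nat.infinite_setOf_prime_mod_four_eq_three.to_subtype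
  let f (p : {p : ℕ | p.Prime ∧ p % 4 = 3}) : ConjClasses (Matrix.SpecialLinearGroup (Fin 2) ℚ) :=
    ConjClasses.mk (antidiag (Units.mk0 (p : ℚ) (by exact_mod_cast p.2.1.ne_zero)))
  refine Set.infinite_of_injective_forall_mem (f := f) ?_
    fun p ↦ ⟨_, ConjClasses.mem_carrier_mk, orderOf_antidiag _⟩
  rintro ⟨p, hp, hp4⟩ ⟨q, hq, _⟩ hpq
  by_contra hne
  have := Fact.mk hp
  have := Fact.mk hq
  obtain ⟨x, y, hxy⟩ :=
    exists_mul_eq_sq_add_sq_of_isConj_antidiag (ConjClasses.mk_eq_mk_iff_isConj.1 hpq)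
  have heven := Nat.even_padicValNat_of_cast_eq_sq_add_sq (n := p * q) hp hp4 (by simpa using hxy)
  rw [padicValNat.mul hp.ne_zero hq.ne_zero, padicValNat_self,
    padicValNat_primes (fun h ↦ hne (Subtype.ext h))] at heven
  exact Nat.not_even_one heven
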